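/- arXiv:2605.12117 — 2 statements merged into one kernel-verified Lean document; each statement's English description precedes it below -/
import Mathlib

section
/- Let X₁,…,Xₙ be Banach spaces such that every continuous n-linear form φ : X₁ × ⋯ × Xₙ → 𝕂 is weakly sequentially continuous. Then, for every Banach space F, every compact continuous n-linear operator A : X₁ × ⋯ × Xₙ → F is weakly sequentially continuous. -/
open Filter Topology

/-- A sequence `x` in a normed space converges weakly to `x₀`. -/
def WeakSeqConv (𝕜 : Type*) [RCLike 𝕜] {Z : Type*} [NormedAddCommGroup Z] [NormedSpace 𝕜 Z]
    (x : ℕ → Z) (x₀ : Z) : Prop :=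
  ∀ φ : Z →L[𝕜] 𝕜, Filter.Tendsto (fun k => φ (x k)) Filter.atTop (nhds (φ x₀))

variable {𝕜 : Type*} [RCLike 𝕜] {n : ℕ} {X : Fin n → Type*}
  [∀ i, NormedAddCommGroup (X i)] [∀ i, NormedSpace 𝕜 (X i)]

/-- A continuous multilinear operator is weakly sequentially continuous. -/
def MLWeaklySeqContinuous {Y : Type*} [NormedAddCommGroup Y] [NormedSpace 𝕜 Y]
    (A : ContinuousMultilinearMap 𝕜 X Y) : Prop :=
  ∀ (x : ∀ i, ℕ → X i) (x₀ : ∀ i, X i), (∀ i, WeakSeqConv 𝕜 (x i) (x₀ i)) →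
    Filter.Tendsto (fun k => A (fun i => x i k)) Filter.atTop (nhds (A x₀))

/-- A continuous multilinear operator is compact. -/
def MLCompact {Y : Type*} [NormedAddCommGroup Y] [NormedSpace 𝕜 Y]
    (A : ContinuousMultilinearMap 𝕜 X Y) : Prop :=
  IsCompact (closure ((fun x => A x) '' {x : ∀ i, X i | ∀ i, ‖x i‖ ≤ 1}))

/-- A weakly convergent sequence is norm bounded. -/
lemma weakSeqConv_bounded {𝕜 : Type*} [RCLike 𝕜] {Z : Type*} [NormedAddCommGroup Z]
    [NormedSpace 𝕜 Z] {x : ℕ → Z} {x₀ : Z} (h : WeakSeqConv 𝕜 x x₀) :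
    ∃ C : ℝ, ∀ k, ‖x k‖ ≤ C := by
  obtain ⟨C, hC⟩ := banach_steinhaus
    (g := fun k => NormedSpace.inclusionInDoubleDual 𝕜 Z (x k)) (fun φ => by
      obtain ⟨c, hc⟩ := ((h φ).norm).bddAbove_range
      exact ⟨c, fun k => by simpa using hc ⟨k, rfl⟩⟩)
  refine ⟨C, fun k => ?_⟩
  have := (NormedSpace.inclusionInDoubleDualLi 𝕜 (E := Z)).norm_map (x k)
  calc ‖x k‖ = ‖NormedSpace.inclusionInDoubleDual 𝕜 Z (x k)‖ := this.symm
    _ ≤ C := hC k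

/-- Lemma 2.5: if every continuous `n`-linear form on `X₁ × ⋯ × Xₙ` is weakly sequentially
continuous, then every compact continuous `n`-linear operator into any Banach space `F` is
weakly sequentially continuous. -/
theorem stmt3 [∀ i, CompleteSpace (X i)]
    (hforms : ∀ φ : ContinuousMultilinearMap 𝕜 X 𝕜, MLWeaklySeqContinuous φ)
    {F : Type*} [NormedAddCommGroup F] [NormedSpace 𝕜 F] [CompleteSpace F]
    (A : ContinuousMultilinearMap 𝕜 X F) (hA : MLCompact A) :
    MLWeaklySeqContinuous A := by
  intro x x₀ hx
  -- Bounds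
  choose C hC using fun i => weakSeqConv_bounded (hx i)
  set M : ℝ := 1 + ∑ i, (|C i| + ‖x₀ i‖) with hM
  have hsumnn : ∀ i : Fin n, 0 ≤ |C i| + ‖x₀ i‖ := fun i => by positivity
  have hM1 : (1 : ℝ) ≤ M := by
    have : 0 ≤ ∑ i, (|C i| + ‖x₀ i‖) := Finset.sum_nonneg fun i _ => hsumnn i
    linarith
  have hMpos : 0 < M := lt_of_lt_of_le one_pos hM1
  have hterm : ∀ i : Fin n, |C i| + ‖x₀ i‖ ≤ M := by
    intro i
    have h := Finset.single_le_sum (f := fun i => |C i| + ‖x₀ i‖)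
      (fun i _ => hsumnn i) (Finset.mem_univ i)
    rw [hM]; linarith
  have hxkM : ∀ i k, ‖x i k‖ ≤ M := fun i k =>
    le_trans (le_trans (hC i k) (le_trans (le_abs_self _) (by linarith [norm_nonneg (x₀ i)])))
      (hterm i)
  have hx0M : ∀ i, ‖x₀ i‖ ≤ M := fun i =>
    le_trans (by linarith [abs_nonneg (C i)]) (hterm i)
  have hMnorm : ‖((M : 𝕜))‖ = M := by
    rw [RCLike.norm_ofReal, abs_of_pos hMpos]
  have hMne : ((M : 𝕜)) ≠ 0 := by
    simpa using ne_of_gt hMpos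
  -- The compact set containing everything
  set K : Set F := closure ((fun x => A x) '' {x : ∀ i, X i | ∀ i, ‖x i‖ ≤ 1}) with hK
  set K2 : Set F := (fun z => ((M : 𝕜) ^ n) • z) '' K with hK2
  have hK2c : IsCompact K2 := hA.image (continuous_const_smul _)
  have hmem : ∀ v : ∀ i, X i, (∀ i, ‖v i‖ ≤ M) → A v ∈ K2 := by
    intro v hv
    have hv' : (fun i => ((M : 𝕜)) • (((M : 𝕜))⁻¹ • v i)) = v := by
      funext i; rw [smul_smul, mul_inv_cancel₀ hMne, one_smul]
    have : A v = ((M : 𝕜) ^ n) • A (fun i => ((M : 𝕜))⁻¹ • v i) := by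
      conv_lhs => rw [← hv']
      rw [A.map_smul_univ (fun _ => (M : 𝕜)) (fun i => ((M : 𝕜))⁻¹ • v i)]
      simp
    rw [this]
    refine ⟨A (fun i => ((M : 𝕜))⁻¹ • v i), subset_closure ⟨_, fun i => ?_, rfl⟩, rfl⟩
    rw [norm_smul, norm_inv, hMnorm]
    rw [inv_mul_le_iff₀ hMpos, mul_one]
    exact hv i
  -- weak convergence of images
  have hweak : ∀ ψ : F →L[𝕜] 𝕜,
      Tendsto (fun k => ψ (A (fun i => x i k))) atTop (𝓝 (ψ (A x₀))) := by
    intro ψ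
    have := hforms (ψ.compContinuousMultilinearMap A) x x₀ hx
    simpa using this
  -- subsequence argument
  apply tendsto_of_subseq_tendsto
  intro ns hns
  obtain ⟨y, hyK2, ms, hmsmono, hconv⟩ :=
    hK2c.tendsto_subseq (x := fun k => A (fun i => x i (ns k)))
      (fun k => hmem _ (fun i => hxkM i (ns k)))
  have hy : y = A x₀ := by
    rw [NormedSpace.eq_iff_forall_dual_eq 𝕜]
    intro ψ
    have h1 : Tendsto (fun k => ψ (A (fun i => x i (ns (ms k))))) atTop (𝓝 (ψ y)) :=
      (ψ.continuous.tendsto y).comp hconv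
    have h2 : Tendsto (fun k => ψ (A (fun i => x i (ns (ms k))))) atTop (𝓝 (ψ (A x₀))) :=
      (hweak ψ).comp (hns.comp hmsmono.tendsto_atTop)
    exact tendsto_nhds_unique h1 h2
  exact ⟨ms, hy ▸ hconv⟩
end

section
/- Let E be a Banach lattice that is an AM-space with unit e, i.e. e ≥ 0 and for every x ∈ E one has ‖x‖ ≤ 1 if and only if |x| ≤ e, and let F be a Dedekind complete Banach lattice. Let P : E → F be a positive continuous n-homogeneous polynomial with associated symmetric n-linear map T_P. Then ‖T_P‖ = ‖P‖ and ‖P(e)‖ = ‖P‖; in particular P attains its norm at e. -/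
open Filter Topology

variable {n : ℕ} {E : Type*} [NormedAddCommGroup E] [Lattice E] [IsOrderedAddMonoid E]
  [HasSolidNorm E] [NormedSpace ℝ E] [PosSMulStrictMono ℝ E]
  {F : Type*} [NormedAddCommGroup F] [Lattice F] [IsOrderedAddMonoid F]
  [HasSolidNorm F] [NormedSpace ℝ F] [PosSMulStrictMono ℝ F]

/-- A continuous `n`-linear map on `Eⁿ` is symmetric; a continuous `n`-homogeneous polynomial
is (identified with) a symmetric continuous `n`-linear map `T_P`, via `P x = T_P (x, …, x)`. -/
def IsSymmML (T : ContinuousMultilinearMap ℝ (fun _ : Fin n => E) F) : Prop :=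
  ∀ (σ : Equiv.Perm (Fin n)) (x : Fin n → E), T (x ∘ σ) = T x

/-- The norm of the `n`-homogeneous polynomial associated to `T`:
`‖P‖ = sup {‖T (x, …, x)‖ : ‖x‖ ≤ 1}`. -/
noncomputable def polyNorm (T : ContinuousMultilinearMap ℝ (fun _ : Fin n => E) F) : ℝ :=
  sSup ((fun x => ‖T (fun _ => x)‖) '' Metric.closedBall (0 : E) 1)

/-!
Positivity of `T` gives `|T x| ≤ T |x| ≤ T (e, …, e)` whenever `|xᵢ| ≤ e` for all `i`. In an
AM-space with unit `e` these are exactly the tuples from the closed unit ball, so the solid norm of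
`F` gives `‖T x‖ ≤ ‖P e‖` there. Hence `‖T‖ ≤ ‖P e‖ ≤ ‖P‖ ≤ ‖T‖`, as `e` lies in the unit ball.
-/

namespace MultilinearMap

variable {R ι M N : Type*} [CommRing R] [Fintype ι] [AddCommGroup M] [Module R M]
  [AddCommGroup N] [Module R N]

lemma map_mono_of_nonneg [PartialOrder M] [IsOrderedAddMonoid M] [PartialOrder N]
    [IsOrderedAddMonoid N] (T : MultilinearMap R (fun _ : ι => M) N)
    (hT : ∀ x, 0 ≤ x → 0 ≤ T x) {a b : ι → M} (ha : 0 ≤ a) (hab : a ≤ b) : T a ≤ T b := by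
  classical
  have hd : 0 ≤ b - a := sub_nonneg.mpr hab
  have hterm (s : Finset ι) : 0 ≤ T (s.piecewise a (b - a)) :=
    hT _ (s.le_piecewise_of_le_of_le ha hd)
  calc T a = T (Finset.univ.piecewise a (b - a)) := by rw [Finset.piecewise_univ]
    _ ≤ ∑ s : Finset ι, T (s.piecewise a (b - a)) :=
      Finset.single_le_sum (fun s _ => hterm s) (Finset.mem_univ _)
    _ = T b := by rw [← map_add_univ, add_sub_cancel]

section Lattice

variable [Lattice M] [Lattice N] [IsOrderedAddMonoid N]

lemma abs_map_piecewise_neg [DecidableEq ι] (T : MultilinearMap R (fun _ : ι => M) N)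
    (hT : ∀ x, 0 ≤ x → 0 ≤ T x) (s : Finset ι) {a b : ι → M} (ha : 0 ≤ a) (hb : 0 ≤ b) :
    |T (s.piecewise a (-b))| = T (s.piecewise a b) := by
  set y := s.piecewise a b
  have hy : 0 ≤ T y := hT _ (s.le_piecewise_of_le_of_le ha hb)
  have hflip : s.piecewise a (-b) = sᶜ.piecewise (fun i => (-1 : R) • y i) y := by
    ext i
    by_cases hi : i ∈ s <;> simp [y, hi]
  rw [hflip, map_piecewise_smul, Finset.prod_const]
  rcases neg_one_pow_eq_or R sᶜ.card with h | h <;> simp [h, abs_of_nonneg hy]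

lemma abs_map_le_map_abs [IsOrderedAddMonoid M] (T : MultilinearMap R (fun _ : ι => M) N)
    (hT : ∀ x, 0 ≤ x → 0 ≤ T x) (x : ι → M) : |T x| ≤ T |x| := by
  classical
  calc |T x| = |∑ s : Finset ι, T (s.piecewise x⁺ (-x⁻))| := by
        rw [← map_add_univ, ← sub_eq_add_neg, posPart_sub_negPart]
    _ ≤ ∑ s : Finset ι, |T (s.piecewise x⁺ (-x⁻))| :=
      Finset.le_sum_of_subadditive _ abs_zero.le abs_add_le _ _
    _ = T |x| := by
      simp_rw [abs_map_piecewise_neg T hT _ (posPart_nonneg x) (negPart_nonneg x)]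
      rw [← map_add_univ, posPart_add_negPart]

end Lattice

lemma norm_map_le_norm_map_of_abs_le [Lattice M] [IsOrderedAddMonoid M] {G : Type*}
    [NormedAddCommGroup G] [Lattice G] [IsOrderedAddMonoid G] [HasSolidNorm G] [Module R G]
    (T : MultilinearMap R (fun _ : ι => M) G) (hT : ∀ x, 0 ≤ x → 0 ≤ T x) {x b : ι → M}
    (hxb : |x| ≤ b) : ‖T x‖ ≤ ‖T b‖ := by
  have hTb : |T x| ≤ T b := (abs_map_le_map_abs T hT x).trans
    (map_mono_of_nonneg T hT (abs_nonneg x) hxb)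
  refine norm_le_norm_of_abs_le_abs ?_
  rwa [abs_of_nonneg ((abs_nonneg _).trans hTb)]

end MultilinearMap

lemma ContinuousMultilinearMap.opNorm_le_of_forall_norm_le_one {ι : Type*} [Fintype ι]
    {M : ι → Type*} [∀ i, NormedAddCommGroup (M i)] [∀ i, NormedSpace ℝ (M i)]
    {N : Type*} [SeminormedAddCommGroup N] [NormedSpace ℝ N]
    (T : ContinuousMultilinearMap ℝ M N) {C : ℝ} (hC : 0 ≤ C)
    (h : ∀ m, (∀ i, ‖m i‖ ≤ 1) → ‖T m‖ ≤ C) : ‖T‖ ≤ C := by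
  refine T.opNorm_le_bound hC fun m => ?_
  by_cases! hz : ∃ i, m i = 0
  · obtain ⟨i, hi⟩ := hz
    rw [T.map_coord_zero i hi, norm_zero]
    positivity
  have hm (i : ι) : ‖m i‖ ≠ 0 := norm_ne_zero_iff.mpr (hz i)
  set u : ∀ i, M i := fun i => ‖m i‖⁻¹ • m i
  have hu (i : ι) : ‖u i‖ ≤ 1 := by
    rw [norm_smul, norm_inv, norm_norm, inv_mul_cancel₀ (hm i)]
  calc ‖T m‖ = ‖(∏ i, ‖m i‖) • T u‖ := by
        rw [← T.map_smul_univ]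
        congr with i
        exact (smul_inv_smul₀ (hm i) _).symm
    _ = (∏ i, ‖m i‖) * ‖T u‖ := by
      rw [norm_smul, Real.norm_of_nonneg (by positivity)]
    _ ≤ C * ∏ i, ‖m i‖ := by
      rw [mul_comm]
      gcongr
      exact h u hu

lemma ContinuousMultilinearMap.norm_apply_diag_le_opNorm {𝕜 ι V W : Type*}
    [NontriviallyNormedField 𝕜] [Fintype ι] [SeminormedAddCommGroup V] [NormedSpace 𝕜 V]
    [SeminormedAddCommGroup W] [NormedSpace 𝕜 W] (T : ContinuousMultilinearMap 𝕜 (fun _ : ι => V) W)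
    {x : V} (hx : ‖x‖ ≤ 1) : ‖T (fun _ => x)‖ ≤ ‖T‖ :=
  T.unit_le_opNorm ((pi_norm_le_iff_of_nonneg zero_le_one).2 fun _ => hx)

section PolyNorm

variable {V W : Type*} [NormedAddCommGroup V] [NormedSpace ℝ V] [NormedAddCommGroup W]
  [NormedSpace ℝ W] (T : ContinuousMultilinearMap ℝ (fun _ : Fin n => V) W)

lemma polyNorm_le_opNorm : polyNorm T ≤ ‖T‖ := by
  refine Real.sSup_le ?_ (norm_nonneg T)
  rintro _ ⟨x, hx, rfl⟩
  exact T.norm_apply_diag_le_opNorm (mem_closedBall_zero_iff.1 hx)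

lemma norm_apply_diag_le_polyNorm {x : V} (hx : ‖x‖ ≤ 1) : ‖T (fun _ => x)‖ ≤ polyNorm T := by
  refine le_csSup ⟨‖T‖, ?_⟩ ⟨x, mem_closedBall_zero_iff.2 hx, rfl⟩
  rintro _ ⟨y, hy, rfl⟩
  exact T.norm_apply_diag_le_opNorm (mem_closedBall_zero_iff.1 hy)

end PolyNorm

theorem stmt14_general
    -- `E` is an AM-space with unit `e`
    (e : E) (he : 0 ≤ e) (ham : ∀ x : E, ‖x‖ ≤ 1 ↔ |x| ≤ e)
    -- `P` a positive continuous `n`-homogeneous polynomial with associated symmetric map `T`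
    (T : ContinuousMultilinearMap ℝ (fun _ : Fin n => E) F)
    (hpos : ∀ x : Fin n → E, (∀ i, 0 ≤ x i) → 0 ≤ T x) :
    ‖T‖ = polyNorm T ∧ ‖T (fun _ => e)‖ = polyNorm T ∧ ‖e‖ ≤ 1 := by
  have he1 : ‖e‖ ≤ 1 := (ham e).2 (abs_of_nonneg he).le
  have hopNorm : ‖T‖ ≤ ‖T (fun _ => e)‖ :=
    T.opNorm_le_of_forall_norm_le_one (norm_nonneg _) fun x hx =>
      T.toMultilinearMap.norm_map_le_norm_map_of_abs_le hpos fun i => (ham (x i)).1 (hx i)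
  have hdiag : ‖T (fun _ => e)‖ ≤ polyNorm T := norm_apply_diag_le_polyNorm T he1
  have hpoly : polyNorm T ≤ ‖T‖ := polyNorm_le_opNorm T
  exact ⟨by linarith, by linarith, he1⟩

/-- Example 3.17(3): if `E` is an AM-space with unit `e` and `F` is a Dedekind complete Banach
lattice, then every positive continuous `n`-homogeneous polynomial `P` on `E` satisfies
`‖T_P‖ = ‖P‖` and `‖P(e)‖ = ‖P‖`; in particular `P` attains its norm at `e`. -/
theorem stmt14 [CompleteSpace E] [CompleteSpace F]
    -- `E` is an AM-space with unit `e`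
    (e : E) (he : 0 ≤ e) (ham : ∀ x : E, ‖x‖ ≤ 1 ↔ |x| ≤ e)
    -- `F` is Dedekind complete
    (hDed : ∀ S : Set F, S.Nonempty → BddAbove S → ∃ s, IsLUB S s)
    -- `P` a positive continuous `n`-homogeneous polynomial with associated symmetric map `T`
    (T : ContinuousMultilinearMap ℝ (fun _ : Fin n => E) F)
    (hsymm : IsSymmML T)
    (hpos : ∀ x : Fin n → E, (∀ i, 0 ≤ x i) → 0 ≤ T x) :
    ‖T‖ = polyNorm T ∧ ‖T (fun _ => e)‖ = polyNorm T ∧ ‖e‖ ≤ 1 :=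
  stmt14_general e he ham T hpos
end
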